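/- For every permutation π, every sequence of operations, each a prefix reversal, a prefix transposition, or a prefix transreversal, that transforms π into the identity permutation has length at least ⌊b(π)/2⌋; i.e., d_RTT(π) ≥ ⌊b(π)/2⌋. -/

import Mathlib

/-- A permutation on `n` elements: a list `[π₀, π₁, …, π_{n+1}]` of distinct
naturals that is a rearrangement of `0, 1, …, n+1` with `π₀ = 0` and
`π_{n+1} = n+1`. -/
def IsPerm (n : ℕ) (π : List ℕ) : Prop :=
  π.Perm (List.range (n + 2)) ∧ π.getD 0 0 = 0 ∧ π.getD (n + 1) 0 = n + 1

/-- Breakpoint count `b(π)`: `1` plus the number of indices `i` with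
`2 ≤ i ≤ n+1` and `|π_i − π_{i−1}| ≠ 1` (these are exactly the consecutive
pairs of the tail `π₁, …, π_{n+1}`). -/
def bp (π : List ℕ) : ℕ :=
  1 + ((π.drop 1).zip (π.drop 2)).countP
        (fun p => !(p.1 + 1 == p.2 || p.2 + 1 == p.1))

/-- Redefined breakpoint count `b′(π)`: the number of indices `i` with
`1 ≤ i ≤ n+1` and `|π_i − π_{i−1}| ≠ 1`. -/
def bp' (π : List ℕ) : ℕ :=
  (π.zip (π.drop 1)).countP
    (fun p => !(p.1 + 1 == p.2 || p.2 + 1 == p.1))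

/-- Prefix reversal `β(1,j)`: `[π₀, π_{j−1}, …, π₁, π_j, …, π_{n+1}]`. -/
def prefixReversal (π : List ℕ) (j : ℕ) : List ℕ :=
  π.take 1 ++ ((π.drop 1).take (j - 1)).reverse ++ π.drop j

/-- Prefix transposition `τ(1,j,k)`:
`[π₀, π_j, …, π_{k−1}, π₁, …, π_{j−1}, π_k, …, π_{n+1}]`. -/
def prefixTransposition (π : List ℕ) (j k : ℕ) : List ℕ :=
  π.take 1 ++ (π.drop j).take (k - j) ++ (π.drop 1).take (j - 1) ++ π.drop k

/-- Prefix transreversal `βτ(1,j,k)`: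
`[π₀, π_j, …, π_{k−1}, π_{j−1}, …, π₁, π_k, …, π_{n+1}]`. -/
def prefixTransreversal (π : List ℕ) (j k : ℕ) : List ℕ :=
  π.take 1 ++ (π.drop j).take (k - j) ++ ((π.drop 1).take (j - 1)).reverse ++ π.drop k

/-- A prefix operation: a prefix reversal, a prefix transposition, or a
prefix transreversal. -/
inductive PrefOp
  | rev (j : ℕ)
  | trans (j k : ℕ)
  | transrev (j k : ℕ)

/-- Apply a prefix operation to a permutation. -/
def PrefOp.apply (π : List ℕ) : PrefOp → List ℕ
  | .rev j => prefixReversal π j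
  | .trans j k => prefixTransposition π j k
  | .transrev j k => prefixTransreversal π j k

/-- Validity of a prefix operation on a permutation of `n` elements:
`3 ≤ j ≤ n+1` for a prefix reversal, `2 ≤ j < k ≤ n+1` for a prefix
transposition or a prefix transreversal. -/
def PrefOp.Valid (n : ℕ) : PrefOp → Prop
  | .rev j => 3 ≤ j ∧ j ≤ n + 1
  | .trans j k => 2 ≤ j ∧ j < k ∧ k ≤ n + 1
  | .transrev j k => 2 ≤ j ∧ j < k ∧ k ≤ n + 1

/-- Is the operation a prefix reversal? -/
def PrefOp.isRev : PrefOp → Bool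
  | .rev _ => true
  | _ => false

/-- Is the operation a prefix transreversal? -/
def PrefOp.isTransrev : PrefOp → Bool
  | .transrev _ _ => true
  | _ => false

/-- Apply a sequence of prefix operations, left to right. -/
def applySeq : List ℕ → List PrefOp → List ℕ
  | π, [] => π
  | π, o :: os => applySeq (o.apply π) os

/-- All operations in the sequence are valid for permutations of `n` elements. -/
def ValidSeq (n : ℕ) (ops : List PrefOp) : Prop :=
  ∀ o ∈ ops, o.Valid n

/-- `fm π` is `m(π) + 1`, where `m(π)` is the largest index `m` such that
`π_i = i` for all `0 ≤ i ≤ m`; i.e. the length of the longest already-sorted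
prefix of `π`. -/
def fm (π : List ℕ) : ℕ :=
  ((List.range π.length).takeWhile (fun i => π.getD i 0 == i)).length

/-- Forward-march prefix reversal: reverses the segment
`π_{m(π)+1}, …, π_{j−1}` in place. -/
def fmPrefixReversal (π : List ℕ) (j : ℕ) : List ℕ :=
  π.take (fm π) ++ ((π.drop (fm π)).take (j - fm π)).reverse ++ π.drop j

/-- Forward-march prefix transposition: cuts the segment
`π_{m(π)+1}, …, π_{j−1}` and pastes it between `π_{k−1}` and `π_k`. -/
def fmPrefixTransposition (π : List ℕ) (j k : ℕ) : List ℕ :=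
  π.take (fm π) ++ (π.drop j).take (k - j) ++
    (π.drop (fm π)).take (j - fm π) ++ π.drop k

/-- A forward-march operation: an FM prefix reversal or an FM prefix
transposition. -/
inductive FMOp
  | rev (j : ℕ)
  | trans (j k : ℕ)

/-- Apply a forward-march operation. -/
def FMOp.apply (π : List ℕ) : FMOp → List ℕ
  | .rev j => fmPrefixReversal π j
  | .trans j k => fmPrefixTransposition π j k

/-- Validity of a forward-march operation on a permutation `π` of `n`
elements: `m(π)+3 ≤ j ≤ n+1` for an FM prefix reversal, and
`m(π)+2 ≤ j ≤ n`, `j < k ≤ n+1` for an FM prefix transposition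
(recall `fm π = m(π) + 1`). -/
def FMOp.Valid (n : ℕ) (π : List ℕ) : FMOp → Prop
  | .rev j => fm π + 2 ≤ j ∧ j ≤ n + 1
  | .trans j k => fm π + 1 ≤ j ∧ j ≤ n ∧ j < k ∧ k ≤ n + 1

/-- Is the forward-march operation an FM prefix reversal? -/
def FMOp.isRev : FMOp → Bool
  | .rev _ => true
  | _ => false

/-- Apply a sequence of forward-march operations, left to right. -/
def applyFMSeq : List ℕ → List FMOp → List ℕ
  | π, [] => π
  | π, o :: os => applyFMSeq (o.apply π) os

/-- Validity of a sequence of forward-march operations, where each operation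
must be valid for the permutation obtained after applying the previous ones. -/
def FMValidSeq (n : ℕ) : List ℕ → List FMOp → Prop
  | _, [] => True
  | π, o :: os => o.Valid n π ∧ FMValidSeq n (o.apply π) os

/-!
Write `b′` for the breakpoint count of the tail `π₁ … π_{n+1}`, so that `b(π) = b′ + 1`.
Each of the three operations fixes `π₀` and turns the tail `u v w` into `v u w` or `v uᴿ w`.
Reversing a block keeps its internal breakpoints, and only the two cuts can destroy
adjacencies, so one operation lowers `b′` by at most two. The identity has `b′ = 0`,
hence a sorting sequence of length `L` has `2L ≥ b′ = b(π) - 1`, i.e. `L ≥ ⌊b(π)/2⌋`.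
-/

namespace List

variable {α : Type*}

@[simp]
theorem consecutivePairs_nil : ([] : List α).consecutivePairs = [] := rfl

@[simp]
theorem consecutivePairs_singleton (x : α) : [x].consecutivePairs = [] := rfl

@[simp]
theorem consecutivePairs_cons_cons (x y : α) (l : List α) :
    (x :: y :: l).consecutivePairs = (x, y) :: (y :: l).consecutivePairs := rfl

theorem consecutivePairs_append (a b : List α) :
    (a ++ b).consecutivePairs =
      a.consecutivePairs ++ a.getLast?.toList.zip b.head?.toList ++ b.consecutivePairs := by
  induction a with
  | nil => simp
  | cons x a ih =>
    cases a with
    | nil => cases b <;> simp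
    | cons y a => simpa using ih

theorem take_append_take_drop_append_drop (l : List α) (a c : ℕ) :
    l.take a ++ (l.drop a).take c ++ l.drop (a + c) = l := by
  rw [append_assoc, ← drop_drop, take_append_drop, take_append_drop]

end List

def isBreakpoint (p : ℕ × ℕ) : Bool :=
  !(p.1 + 1 == p.2 || p.2 + 1 == p.1)

lemma isBreakpoint_swap (p : ℕ × ℕ) : isBreakpoint p.swap = isBreakpoint p := by
  simp [isBreakpoint, Bool.or_comm]

lemma bp'_eq_countP (l : List ℕ) : bp' l = l.consecutivePairs.countP isBreakpoint := by
  rw [bp', List.drop_one]; rfl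

@[simp]
lemma bp'_nil : bp' [] = 0 := rfl

@[simp]
lemma bp'_singleton (x : ℕ) : bp' [x] = 0 := rfl

lemma bp'_append (a b : List ℕ) :
    bp' (a ++ b) =
      bp' a + (a.getLast?.toList.zip b.head?.toList).countP isBreakpoint + bp' b := by
  simp only [bp'_eq_countP, List.consecutivePairs_append, List.countP_append]

lemma le_bp'_append (a b : List ℕ) : bp' a + bp' b ≤ bp' (a ++ b) := by
  rw [bp'_append]; omega

lemma bp'_append_le (a b : List ℕ) : bp' (a ++ b) ≤ bp' a + bp' b + 1 := by
  have : (a.getLast?.toList.zip b.head?.toList).length ≤ 1 := by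
    cases a.getLast? <;> simp
  have := (List.countP_le_length (p := isBreakpoint)).trans this
  rw [bp'_append]; omega

lemma bp'_reverse (l : List ℕ) : bp' l.reverse = bp' l := by
  induction l with
  | nil => rfl
  | cons x l ih =>
    rw [List.reverse_cons, bp'_append, ih, ← List.singleton_append (l := l), bp'_append,
      List.getLast?_reverse]
    cases l.head? with
    | none => simp
    | some y => simp [← isBreakpoint_swap (y, x), Nat.add_comm]

lemma bp'_range' (s m : ℕ) : bp' (List.range' s m) = 0 := by
  induction m generalizing s with
  | zero => rfl
  | succ m ih =>
    rw [List.range'_succ, ← List.singleton_append, bp'_append, ih]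
    cases m <;> simp [List.range'_succ, bp'_eq_countP, isBreakpoint]

lemma bp_eq_bp'_tail_add_one (π : List ℕ) : bp π = bp' π.tail + 1 := by
  rw [bp, bp', ← List.drop_one, List.drop_drop, Nat.add_comm]

lemma bp'_le_bp'_append_swap (u v w u' : List ℕ) (hu : bp' u' = bp' u) :
    bp' (u ++ v ++ w) ≤ bp' (v ++ u' ++ w) + 2 := by
  have := bp'_append_le (u ++ v) w
  have := bp'_append_le u v
  have := le_bp'_append (v ++ u') w
  have := le_bp'_append v u'
  omega

lemma PrefOp.exists_tail_apply_eq {n : ℕ} {o : PrefOp} (ho : o.Valid n) (x : ℕ) (ρ : List ℕ) :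
    ∃ u v w u', ρ = u ++ v ++ w ∧ (u' = u ∨ u' = u.reverse) ∧
      (o.apply (x :: ρ)).tail = v ++ u' ++ w := by
  cases o with
  | rev j =>
    obtain ⟨a, rfl⟩ : ∃ a, j = a + 1 := ⟨j - 1, by grind [PrefOp.Valid]⟩
    refine ⟨ρ.take a, [], ρ.drop a, (ρ.take a).reverse, by simp, .inr rfl, ?_⟩
    simp [PrefOp.apply, prefixReversal]
  | trans j k =>
    obtain ⟨a, c, rfl, rfl⟩ : ∃ a c, j = a + 1 ∧ k = a + 1 + c :=
      ⟨j - 1, k - j, by grind [PrefOp.Valid]⟩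
    refine ⟨ρ.take a, (ρ.drop a).take c, ρ.drop (a + c), ρ.take a,
      (ρ.take_append_take_drop_append_drop a c).symm, .inl rfl, ?_⟩
    simp [PrefOp.apply, prefixTransposition, Nat.add_right_comm a 1 c]
  | transrev j k =>
    obtain ⟨a, c, rfl, rfl⟩ : ∃ a c, j = a + 1 ∧ k = a + 1 + c :=
      ⟨j - 1, k - j, by grind [PrefOp.Valid]⟩
    refine ⟨ρ.take a, (ρ.drop a).take c, ρ.drop (a + c), (ρ.take a).reverse,
      (ρ.take_append_take_drop_append_drop a c).symm, .inr rfl, ?_⟩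
    simp [PrefOp.apply, prefixTransreversal, Nat.add_right_comm a 1 c]

lemma PrefOp.bp'_tail_le_apply {n : ℕ} {o : PrefOp} (ho : o.Valid n) (π : List ℕ) :
    bp' π.tail ≤ bp' (o.apply π).tail + 2 := by
  cases π with
  | nil => simp
  | cons x ρ =>
    obtain ⟨u, v, w, u', rfl, hu', happly⟩ := o.exists_tail_apply_eq ho x (ρ := ρ)
    rw [List.tail_cons, happly]
    apply bp'_le_bp'_append_swap
    rcases hu' with rfl | rfl
    · rfl
    · exact bp'_reverse u

lemma bp'_tail_le_applySeq {n : ℕ} {ops : List PrefOp} (hval : ValidSeq n ops) (π : List ℕ) :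
    bp' π.tail ≤ bp' (applySeq π ops).tail + 2 * ops.length := by
  induction ops generalizing π with
  | nil => simp [applySeq]
  | cons o ops ih =>
    obtain ⟨ho, hval⟩ := List.forall_mem_cons.mp hval
    have hstep := PrefOp.bp'_tail_le_apply ho π
    have hrest := ih hval (o.apply π)
    rw [applySeq, List.length_cons]
    omega

theorem sortRTT_length_lower_bound_general
    (n : ℕ) (π : List ℕ)
    (ops : List PrefOp) (hval : ValidSeq n ops)
    (hsort : applySeq π ops = List.range (n + 2)) :
    bp π / 2 ≤ ops.length := by
  have hsorted : bp' (List.range (n + 2)).tail = 0 := by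
    rw [List.range_eq_range', List.tail_range']
    exact bp'_range' _ _
  have hbound := bp'_tail_le_applySeq hval π
  rw [hsort, hsorted] at hbound
  rw [bp_eq_bp'_tail_add_one]
  omega

/-- every sequence of prefix reversals, prefix transpositions and
prefix transreversals sorting `π` has length at least `⌊b(π)/2⌋`. -/
theorem sortRTT_length_lower_bound
    (n : ℕ) (π : List ℕ) (hπ : IsPerm n π)
    (ops : List PrefOp) (hval : ValidSeq n ops)
    (hsort : applySeq π ops = List.range (n + 2)) :
    bp π / 2 ≤ ops.length :=
  sortRTT_length_lower_bound_general n π ops hval hsort
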